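/- arXiv:2604.19904 — 6 statements merged into one kernel-verified Lean document; each statement's English description precedes it below -/
import Mathlib

section
/- Let T, N_g be positive integers, let b_1, …, b_{N_g} be nonzero vectors in ℂ^T, and let b̂_n = b_n/‖b_n‖ be the corresponding unit vectors. Define d_min = 1 − max_{i≠j} |b̂_i^H b̂_j|². Fix k ∈ {1,…,N_g}, a nonzero scalar α ∈ ℂ, and a noise vector z ∈ ℂ^T, and set y = α b_k + z. If |b̂_l^H z| < (1/2)|α|‖b_k‖(1 − √(1 − d_min)) for every l ∈ {1,…,N_g}, then |b̂_l^H y| < |b̂_k^H y| for every l ≠ k; i.e., the maximum-likelihood decoder, which outputs argmax_n |b̂_n^H y|², correctly recovers the index k. -/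
/-! Writing `y = a • v + z` with `v = b̂_k` a unit vector and `a = α ‖b_k‖`, the matched filter
gives `b̂_k^H y = a + b̂_k^H z` while `b̂_l^H y = a b̂_l^H b̂_k + b̂_l^H z` with
`|b̂_l^H b̂_k| ≤ √(1 - d_min)`. Each noise term is less than half the gap
`|a| (1 - √(1 - d_min))` between the two signal terms, so the noise cannot reverse the order. -/

section MatchedFilter

variable {𝕜 E : Type*} [RCLike 𝕜] [NormedAddCommGroup E] [InnerProductSpace 𝕜 E]

theorem norm_inner_lt_norm_inner_of_noise_lt {u v z : E} {a : 𝕜} {s : ℝ} (hv : ‖v‖ = 1)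
    (huv : ‖(inner 𝕜 u v : 𝕜)‖ ≤ s)
    (huz : ‖(inner 𝕜 u z : 𝕜)‖ < ‖a‖ * (1 - s) / 2)
    (hvz : ‖(inner 𝕜 v z : 𝕜)‖ < ‖a‖ * (1 - s) / 2) :
    ‖(inner 𝕜 u (a • v + z) : 𝕜)‖ < ‖(inner 𝕜 v (a • v + z) : 𝕜)‖ := by
  have hsignal : ‖a‖ - ‖(inner 𝕜 v z : 𝕜)‖ ≤ ‖(inner 𝕜 v (a • v + z) : 𝕜)‖ := by
    rw [inner_add_right, inner_smul_right, inner_self_eq_one_of_norm_eq_one hv, mul_one]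
    simpa using norm_sub_norm_le a (-inner 𝕜 v z)
  have hcross : ‖(inner 𝕜 u (a • v + z) : 𝕜)‖ ≤ ‖a‖ * s + ‖(inner 𝕜 u z : 𝕜)‖ := by
    rw [inner_add_right, inner_smul_right]
    refine (norm_add_le _ _).trans (add_le_add_left ?_ _)
    rw [norm_mul]
    exact mul_le_mul_of_nonneg_left huv (norm_nonneg a)
  linarith

end MatchedFilter

theorem le_sSup_offDiag {ι : Type*} [Finite ι] (g : ι → ι → ℝ) {i j : ι} (hij : i ≠ j) :
    g i j ≤ sSup {x : ℝ | ∃ i j : ι, i ≠ j ∧ x = g i j} := by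
  refine le_csSup ((Set.finite_range fun p : ι × ι => g p.1 p.2).subset ?_).bddAbove
    ⟨i, j, hij, rfl⟩
  rintro x ⟨i, j, -, rfl⟩
  exact ⟨(i, j), rfl⟩

theorem stmt_0_general (T Ng : ℕ)
    (b : Fin Ng → EuclideanSpace ℂ (Fin T)) (hb : ∀ n, b n ≠ 0)
    (bhat : Fin Ng → EuclideanSpace ℂ (Fin T))
    (hbhat : ∀ n, bhat n = ‖b n‖⁻¹ • b n)
    (dmin : ℝ)
    (hdmin : dmin = 1 - sSup {x : ℝ | ∃ i j : Fin Ng, i ≠ j ∧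
        x = ‖(inner ℂ (bhat i) (bhat j) : ℂ)‖ ^ 2})
    (k : Fin Ng) (α : ℂ)
    (z y : EuclideanSpace ℂ (Fin T)) (hy : y = α • b k + z)
    (hz : ∀ l : Fin Ng, ‖(inner ℂ (bhat l) z : ℂ)‖ <
        (1 / 2) * ‖α‖ * ‖b k‖ * (1 - Real.sqrt (1 - dmin))) :
    ∀ l : Fin Ng, l ≠ k → ‖(inner ℂ (bhat l) y : ℂ)‖ < ‖(inner ℂ (bhat k) y : ℂ)‖ := by
  intro l hl
  have hunit : ‖bhat k‖ = 1 := by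
    rw [hbhat]; exact norm_smul_inv_norm (𝕜 := ℝ) (hb k)
  have hy' : y = (α * (‖b k‖ : ℂ)) • bhat k + z := by
    rw [hy, hbhat, mul_smul, Complex.coe_smul, smul_inv_smul₀ (norm_ne_zero_iff.mpr (hb k))]
  have hcoherence : ‖(inner ℂ (bhat l) (bhat k) : ℂ)‖ ≤ Real.sqrt (1 - dmin) := by
    refine (le_abs_self _).trans (Real.abs_le_sqrt ?_)
    have := le_sSup_offDiag (fun i j => ‖(inner ℂ (bhat i) (bhat j) : ℂ)‖ ^ 2) hl
    linarith
  have hnoise : ∀ n, ‖(inner ℂ (bhat n) z : ℂ)‖ <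
      ‖α * (‖b k‖ : ℂ)‖ * (1 - Real.sqrt (1 - dmin)) / 2 := fun n => by
    rw [norm_mul, Complex.norm_real, norm_norm]
    linarith [hz n]
  rw [hy']
  exact norm_inner_lt_norm_inner_of_noise_lt hunit hcoherence (hnoise l) (hnoise k)

/-- Correctness of the maximum-likelihood decoder under the
noise condition involving the minimum subspace distance. -/
theorem stmt_0 (T Ng : ℕ) (hT : 0 < T) (hNg : 0 < Ng)
    (b : Fin Ng → EuclideanSpace ℂ (Fin T)) (hb : ∀ n, b n ≠ 0)
    (bhat : Fin Ng → EuclideanSpace ℂ (Fin T))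
    (hbhat : ∀ n, bhat n = ‖b n‖⁻¹ • b n)
    (dmin : ℝ)
    (hdmin : dmin = 1 - sSup {x : ℝ | ∃ i j : Fin Ng, i ≠ j ∧
        x = ‖(inner ℂ (bhat i) (bhat j) : ℂ)‖ ^ 2})
    (k : Fin Ng) (α : ℂ) (hα : α ≠ 0)
    (z y : EuclideanSpace ℂ (Fin T)) (hy : y = α • b k + z)
    (hz : ∀ l : Fin Ng, ‖(inner ℂ (bhat l) z : ℂ)‖ <
        (1 / 2) * ‖α‖ * ‖b k‖ * (1 - Real.sqrt (1 - dmin))) :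
    ∀ l : Fin Ng, l ≠ k → ‖(inner ℂ (bhat l) y : ℂ)‖ < ‖(inner ℂ (bhat k) y : ℂ)‖ :=
  stmt_0_general T Ng b hb bhat hbhat dmin hdmin k α z y hy hz
end

section
/- Let T ≥ 1, N_g ≥ 2, and let B = [b_1,…,b_{N_g}] ∈ {−1,+1}^{T×N_g} be a BPSK codebook with minimum Hamming distance d_min^Ham, maximum Hamming distance d_max^Ham > 0, and ratio ρ = d_min^Ham / d_max^Ham ∈ (0,1]. Then the minimum subspace distance satisfies 1 − max_{i≠j} |b_i^T b_j|²/T² ≤ 1 − ((1−ρ)/(1+ρ))². -/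
/-!
The correlation of two `±1` codewords at Hamming distance `d` is `T - 2d`, so each pair
contributes `(1 - 2d/T)²` to the maximum. Writing `m = d_min`, `M = d_max` and
`(1 - ρ)/(1 + ρ) = (M - m)/(M + m)`, if this value exceeded both `1 - 2m/T` and `2M/T - 1`,
clearing denominators would give both `m + M > T` and `m + M < T`.
-/

open Finset

theorem sum_mul_eq_card_sub_two_mul_card_ne {ι : Type*} [Fintype ι]
    {u v : ι → ℝ} (hu : ∀ t, u t = 1 ∨ u t = -1) (hv : ∀ t, v t = 1 ∨ v t = -1) :
    ∑ t, u t * v t = Fintype.card ι - 2 * #{t | u t ≠ v t} := by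
  have hterm : ∀ t, u t * v t = 1 - 2 * if u t ≠ v t then 1 else 0 := by
    intro t
    rcases hu t with h | h <;> rcases hv t with h' | h' <;> norm_num [h, h']
  simp only [hterm, sum_sub_distrib, ← mul_sum, sum_boole, sum_const, card_univ, nsmul_one]

theorem sq_abs_sum_mul_div_sq {ι : Type*} [Fintype ι] [Nonempty ι]
    {u v : ι → ℝ} (hu : ∀ t, u t = 1 ∨ u t = -1) (hv : ∀ t, v t = 1 ∨ v t = -1) :
    |∑ t, u t * v t| ^ 2 / (Fintype.card ι : ℝ) ^ 2 =
      (1 - 2 * (#{t | u t ≠ v t} : ℝ) / Fintype.card ι) ^ 2 := by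
  have hcard : (Fintype.card ι : ℝ) ≠ 0 := by positivity
  rw [sq_abs, sum_mul_eq_card_sub_two_mul_card_ne hu hv, ← div_pow]
  field_simp

theorem div_one_add_le_max_of_le {m M T : ℝ} (hm : 0 ≤ m) (hmM : m ≤ M) (hT : 0 < T) :
    (1 - m / M) / (1 + m / M) ≤ max (1 - 2 * m / T) (2 * M / T - 1) := by
  rcases (hm.trans hmM).eq_or_lt with rfl | hM
  · obtain rfl : m = 0 := le_antisymm hmM hm
    simp
  have hratio : (1 - m / M) / (1 + m / M) = (M - m) / (M + m) := by
    field_simp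
  rw [hratio, le_max_iff]
  by_contra! h
  obtain ⟨hlow, hhigh⟩ := h
  rw [one_sub_div hT.ne', div_lt_div_iff₀ hT (by linarith)] at hlow
  rw [div_sub_one hT.ne', div_lt_div_iff₀ hT (by linarith)] at hhigh
  nlinarith

theorem stmt_6_general (T Ng : ℕ) (hT : 1 ≤ T)
    (b : Fin Ng → Fin T → ℝ) (hb : ∀ i t, b i t = 1 ∨ b i t = -1)
    (hne : (Finset.univ : Finset (Fin Ng)).offDiag.Nonempty)
    (dHam : Fin Ng → Fin Ng → ℕ)
    (hdHam : ∀ i j, dHam i j = (Finset.univ.filter (fun t => b i t ≠ b j t)).card)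
    (dmin dmax : ℕ)
    (hdmin : dmin = (Finset.univ : Finset (Fin Ng)).offDiag.inf' hne
        (fun p => dHam p.1 p.2))
    (hdmax : dmax = (Finset.univ : Finset (Fin Ng)).offDiag.sup' hne
        (fun p => dHam p.1 p.2))
    (ρ : ℝ) (hρ : ρ = (dmin : ℝ) / (dmax : ℝ))
    (hρ0 : 0 < ρ) (hρ1 : ρ ≤ 1) :
    1 - (Finset.univ : Finset (Fin Ng)).offDiag.sup' hne
          (fun p => |∑ t, b p.1 t * b p.2 t| ^ 2 / (T : ℝ) ^ 2) ≤
      1 - ((1 - ρ) / (1 + ρ)) ^ 2 := by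
  have : Nonempty (Fin T) := ⟨⟨0, hT⟩⟩
  have hpair : ∀ p ∈ (univ : Finset (Fin Ng)).offDiag,
      (1 - 2 * (dHam p.1 p.2 : ℝ) / T) ^ 2 ≤
        univ.offDiag.sup' hne (fun p => |∑ t, b p.1 t * b p.2 t| ^ 2 / (T : ℝ) ^ 2) := by
    intro p hp
    have hcorr := sq_abs_sum_mul_div_sq (hb p.1) (hb p.2)
    rw [Fintype.card_fin] at hcorr
    rw [hdHam, ← hcorr]
    exact le_sup' (fun p => |∑ t, b p.1 t * b p.2 t| ^ 2 / (T : ℝ) ^ 2) hp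
  obtain ⟨p, hp, hpmin⟩ := exists_mem_eq_inf' hne (fun p => dHam p.1 p.2)
  obtain ⟨q, hq, hqmax⟩ := exists_mem_eq_sup' hne (fun p => dHam p.1 p.2)
  rw [← hdmin] at hpmin
  rw [← hdmax] at hqmax
  have hle : (dmin : ℝ) ≤ dmax := by
    rw [hpmin, hdmax]
    exact_mod_cast le_sup' (fun p : Fin Ng × Fin Ng => dHam p.1 p.2) hp
  have hbound := div_one_add_le_max_of_le (Nat.cast_nonneg _) hle (by exact_mod_cast hT : (0 : ℝ) < T)
  rw [← hρ] at hbound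
  have hc0 : 0 ≤ (1 - ρ) / (1 + ρ) := div_nonneg (by linarith) (by linarith)
  rcases le_max_iff.mp hbound with hmin | hmax
  · have hsup := hpair p hp
    rw [← hpmin] at hsup
    nlinarith [pow_le_pow_left₀ hc0 hmin 2]
  · have hsup := hpair q hq
    rw [← hqmax] at hsup
    nlinarith [pow_le_pow_left₀ hc0 hmax 2]

/-- For a BPSK codebook with min/max Hamming distance ratio
`ρ = d_min^Ham / d_max^Ham ∈ (0,1]`, the minimum subspace distance satisfies
`1 − max_{i≠j} |bᵢᵀbⱼ|²/T² ≤ 1 − ((1−ρ)/(1+ρ))²`. -/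
theorem stmt_6 (T Ng : ℕ) (hT : 1 ≤ T) (hNg : 2 ≤ Ng)
    (b : Fin Ng → Fin T → ℝ) (hb : ∀ i t, b i t = 1 ∨ b i t = -1)
    (hne : (Finset.univ : Finset (Fin Ng)).offDiag.Nonempty)
    (dHam : Fin Ng → Fin Ng → ℕ)
    (hdHam : ∀ i j, dHam i j = (Finset.univ.filter (fun t => b i t ≠ b j t)).card)
    (dmin dmax : ℕ)
    (hdmin : dmin = (Finset.univ : Finset (Fin Ng)).offDiag.inf' hne
        (fun p => dHam p.1 p.2))
    (hdmax : dmax = (Finset.univ : Finset (Fin Ng)).offDiag.sup' hne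
        (fun p => dHam p.1 p.2))
    (hdmaxpos : 0 < dmax)
    (ρ : ℝ) (hρ : ρ = (dmin : ℝ) / (dmax : ℝ))
    (hρ0 : 0 < ρ) (hρ1 : ρ ≤ 1) :
    1 - (Finset.univ : Finset (Fin Ng)).offDiag.sup' hne
          (fun p => |∑ t, b p.1 t * b p.2 t| ^ 2 / (T : ℝ) ^ 2) ≤
      1 - ((1 - ρ) / (1 + ρ)) ^ 2 :=
  stmt_6_general T Ng hT b hb hne dHam hdHam dmin dmax hdmin hdmax ρ hρ hρ0 hρ1
end

section
/- (Welch bound) Let T ≥ 1 and N > T, and let v_1, …, v_N ∈ ℂ^T be unit vectors (‖v_i‖ = 1 for all i). Then max_{i≠j} |v_i^H v_j|² ≥ (N − T)/(T(N − 1)). Equivalently, the minimum subspace distance 1 − max_{i≠j} |v_i^H v_j|² is at most 1 − (N − T)/(T(N − 1)). -/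
/-!
Write the `v i` in an orthonormal basis of the `d`-dimensional space as the columns of a matrix
`M`. The Gram matrix `Mᴴ * M` and the frame operator `M * Mᴴ` have the same trace `∑ ‖v i‖ ^ 2`
and, by cyclicity of the trace, the same Frobenius norm `∑ |⟪v i, v j⟫| ^ 2`. Cauchy–Schwarz on
the `d` diagonal entries of the frame operator gives `(∑ ‖v i‖ ^ 2) ^ 2 ≤ d * ∑ |⟪v i, v j⟫| ^ 2`.
For `N` unit vectors the diagonal of the Gram matrix contributes `N`, so the `N (N - 1)`
off-diagonal terms average at least `(N ^ 2 / d - N) / (N (N - 1)) = (N - d) / (d (N - 1))`,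
and some term is at least the average.
-/

open Finset Matrix RCLike
open scoped InnerProductSpace

namespace Matrix

variable {𝕜 m n : Type*} [RCLike 𝕜] [Fintype m] [Fintype n]

theorem sum_norm_sq_eq_re_trace_mul_conjTranspose (A : Matrix m n 𝕜) :
    ∑ i, ∑ j, ‖A i j‖ ^ 2 = re (A * Aᴴ).trace := by
  simp [trace, mul_apply, RCLike.mul_conj]

theorem re_trace_sq_le_card_mul_sum_norm_sq (A : Matrix n n 𝕜) :
    re A.trace ^ 2 ≤ Fintype.card n * ∑ i, ∑ j, ‖A i j‖ ^ 2 := calc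
  re A.trace ^ 2 = (∑ i, re (A i i)) ^ 2 := by simp [trace]
  _ ≤ Fintype.card n * ∑ i, re (A i i) ^ 2 := sq_sum_le_card_mul_sum_sq
  _ ≤ Fintype.card n * ∑ i, ‖A i i‖ ^ 2 := by
    gcongr _ * ?_
    exact sum_le_sum fun i _ ↦ sq_le_sq.mpr ((abs_re_le_norm (A i i)).trans (le_abs_self _))
  _ ≤ Fintype.card n * ∑ i, ∑ j, ‖A i j‖ ^ 2 := by
    gcongr with i
    exact single_le_sum (f := fun j ↦ ‖A i j‖ ^ 2) (fun _ _ ↦ by positivity) (mem_univ i)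

theorem sum_norm_sq_conjTranspose_mul_self (M : Matrix m n 𝕜) :
    ∑ i, ∑ j, ‖(Mᴴ * M) i j‖ ^ 2 = ∑ i, ∑ j, ‖(M * Mᴴ) i j‖ ^ 2 := by
  simp only [sum_norm_sq_eq_re_trace_mul_conjTranspose, conjTranspose_mul,
    conjTranspose_conjTranspose, Matrix.mul_assoc]
  rw [trace_mul_comm]
  simp only [Matrix.mul_assoc]

end Matrix

theorem exists_ne_offDiag_average_le {κ : Type*} [Fintype κ] (f : κ → κ → ℝ)
    (h : 1 < Fintype.card κ) :
    ∃ i j, i ≠ j ∧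
      (∑ i, ∑ j, f i j - ∑ i, f i i) / (Fintype.card κ * (Fintype.card κ - 1)) ≤ f i j := by
  classical
  have hsplit : ∑ i, ∑ j, f i j = ∑ i, f i i + ∑ p ∈ univ.offDiag, f p.1 p.2 := by
    rw [← sum_product', ← diag_union_offDiag, sum_union (disjoint_diag_offDiag _)]
    simp [Finset.diag]
  have hcard : (#(univ.offDiag : Finset (κ × κ)) : ℝ) =
      Fintype.card κ * (Fintype.card κ - 1) := by
    rw [offDiag_card, card_univ, Nat.cast_sub (Nat.le_mul_self _)]
    push_cast
    ring
  have hpos : (0 : ℝ) < Fintype.card κ * (Fintype.card κ - 1) := by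
    have : (1 : ℝ) < Fintype.card κ := by exact_mod_cast h
    exact mul_pos (by linarith) (by linarith)
  obtain ⟨p, hp, hle⟩ := exists_le_of_sum_le (card_pos.mp (Nat.cast_pos.mp (hcard ▸ hpos)))
    (f := fun _ ↦ (∑ i, ∑ j, f i j - ∑ i, f i i) / (Fintype.card κ * (Fintype.card κ - 1)))
    (g := fun p ↦ f p.1 p.2) (by
      rw [sum_const, nsmul_eq_mul, hcard, hsplit, add_sub_cancel_left, mul_div_cancel₀ _ hpos.ne'])
  exact ⟨p.1, p.2, (mem_offDiag.mp hp).2.2, hle⟩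

variable {𝕜 E κ : Type*} [RCLike 𝕜] [NormedAddCommGroup E] [InnerProductSpace 𝕜 E]
  [FiniteDimensional 𝕜 E] [Fintype κ]

theorem sq_sum_norm_sq_le_finrank_mul_sum_norm_inner_sq (v : κ → E) :
    (∑ i, ‖v i‖ ^ 2) ^ 2 ≤ Module.finrank 𝕜 E * ∑ i, ∑ j, ‖⟪v i, v j⟫_𝕜‖ ^ 2 := by
  let b := stdOrthonormalBasis 𝕜 E
  let M := of fun s i ↦ b.repr (v i) s
  have hgram : gram 𝕜 v = Mᴴ * M := gram_eq_conjTranspose_mul b v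
  have htrace : ∑ i, ‖v i‖ ^ 2 = re (M * Mᴴ).trace := by
    rw [trace_mul_comm, ← hgram]
    simp [trace]
  have hfrob : ∑ i, ∑ j, ‖⟪v i, v j⟫_𝕜‖ ^ 2 = ∑ s, ∑ t, ‖(M * Mᴴ) s t‖ ^ 2 := by
    rw [← sum_norm_sq_conjTranspose_mul_self, ← hgram]
    rfl
  rw [htrace, hfrob]
  simpa using re_trace_sq_le_card_mul_sum_norm_sq (M * Mᴴ)

/-- Welch bound: For `N > T` unit vectors in `ℂ^T`, some distinct
pair satisfies `|vᵢᴴvⱼ|² ≥ (N − T)/(T(N − 1))`; equivalently the minimum subspace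
distance is at most `1 − (N − T)/(T(N − 1))`. -/
theorem stmt_9 (T N : ℕ) (hT : 1 ≤ T) (hN : T < N)
    (v : Fin N → EuclideanSpace ℂ (Fin T)) (hv : ∀ i, ‖v i‖ = 1) :
    ∃ i j : Fin N, i ≠ j ∧
      ((N : ℝ) - T) / (T * ((N : ℝ) - 1)) ≤ ‖(inner ℂ (v i) (v j) : ℂ)‖ ^ 2 ∧
      1 - ‖(inner ℂ (v i) (v j) : ℂ)‖ ^ 2 ≤ 1 - ((N : ℝ) - T) / (T * ((N : ℝ) - 1)) := by
  have hwelch := sq_sum_norm_sq_le_finrank_mul_sum_norm_inner_sq (𝕜 := ℂ) v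
  simp only [hv, finrank_euclideanSpace_fin, one_pow, sum_const, card_univ, Fintype.card_fin,
    nsmul_eq_mul, mul_one] at hwelch
  have hdiag : ∀ i, ‖⟪v i, v i⟫_ℂ‖ ^ 2 = 1 := by simp [hv]
  obtain ⟨i, j, hij, hle⟩ := exists_ne_offDiag_average_le (fun i j ↦ ‖⟪v i, v j⟫_ℂ‖ ^ 2)
    (by simp only [Fintype.card_fin]; omega)
  simp only [hdiag, sum_const, card_univ, Fintype.card_fin, nsmul_eq_mul, mul_one] at hle
  have hbound : ((N : ℝ) - T) / (T * ((N : ℝ) - 1)) ≤ ‖⟪v i, v j⟫_ℂ‖ ^ 2 := by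
    refine le_trans ?_ hle
    have hT' : (1 : ℝ) ≤ T := by exact_mod_cast hT
    have hN' : (T : ℝ) + 1 ≤ N := by exact_mod_cast hN
    rw [div_le_div_iff₀ (by nlinarith) (by nlinarith)]
    nlinarith
  exact ⟨i, j, hij, hbound, sub_le_sub_left hbound 1⟩
end

section
/- Let T ≥ 2, N_g = T² − 1, and let Ω = {d_1,…,d_T} be a set of T integers that is a Sidon set modulo N_g: for all indices (i,j) ≠ (m,n) with i ≠ j and m ≠ n, the differences d_i − d_j and d_m − d_n are incongruent modulo N_g, and no difference d_i − d_j with i ≠ j is ≡ 0 mod N_g. Then for every integer p with p ≢ 0 (mod N_g), the exponential sum satisfies |Σ_{t=1}^{T} e^{2πi d_t p / N_g}|² ≤ 2T − 1. -/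
/-!
Write `S = ∑ₜ ψ(dₜ)` with `ψ = e^{2πi p · /N_g}` a nontrivial additive character of `ZMod N_g`.
Then `|S|² = T + ∑_{r ∈ D} ψ(r)`, where the Sidon property makes the difference set `D` have
exactly `T² − T` elements. The values of `ψ` over the whole group sum to zero, so the sum over
`D` has the modulus of the sum over the complement of `D`, which has `N_g − (T² − T) = T − 1`
terms of modulus one.
-/

open Finset

namespace AddChar

variable {G K : Type*} [AddCommGroup G] [Fintype G] [RCLike K]

lemma norm_sum_le_card_compl {ψ : AddChar G K} (hψ : ψ ≠ 1) (s : Finset G) :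
    ‖∑ x ∈ s, ψ x‖ ≤ Fintype.card G - #s := by
  classical
  have hsum : ∑ x ∈ s, ψ x = -∑ x ∈ sᶜ, ψ x := by
    rw [eq_neg_iff_add_eq_zero, sum_add_sum_compl, sum_eq_zero_of_ne_one hψ]
  calc ‖∑ x ∈ s, ψ x‖ = ‖∑ x ∈ sᶜ, ψ x‖ := by rw [hsum, norm_neg]
    _ ≤ ∑ x ∈ sᶜ, ‖ψ x‖ := norm_sum_le _ _
    _ = #sᶜ := by simp only [norm_apply, sum_const, nsmul_eq_mul, mul_one]
    _ = Fintype.card G - #s := by rw [card_compl, Nat.cast_sub (card_le_univ s)]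

variable {ι : Type*} [Fintype ι] [DecidableEq ι]

lemma norm_sq_sum_eq_card_add_sum_offDiag (ψ : AddChar G K) (a : ι → G) :
    (‖∑ i, ψ (a i)‖ ^ 2 : K) = Fintype.card ι + ∑ x ∈ univ.offDiag, ψ (a x.1 - a x.2) := by
  have hdiag : ∑ x ∈ (univ : Finset ι).diag, ψ (a x.1 - a x.2) = Fintype.card ι := by
    rw [sum_congr rfl fun x hx => by rw [(mem_diag.mp hx).2, sub_self, map_zero_eq_one],
      sum_const, diag_card, card_univ, nsmul_one]
  rw [← RCLike.mul_conj, map_sum, sum_mul_sum, ← hdiag, ← sum_union (disjoint_diag_offDiag _),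
    diag_union_offDiag, univ_product_univ, ← Fintype.sum_prod_type']
  simp only [sub_eq_add_neg, map_add_eq_mul, map_neg_eq_conj]

theorem norm_sq_sum_le_of_injOn_sub {ψ : AddChar G K} (hψ : ψ ≠ 1) (a : ι → G)
    (ha : Set.InjOn (fun x : ι × ι => a x.1 - a x.2) ((univ : Finset ι).offDiag : Set (ι × ι))) :
    ‖∑ i, ψ (a i)‖ ^ 2 ≤ Fintype.card G + 2 * Fintype.card ι - Fintype.card ι ^ 2 := by
  classical
  set D := univ.offDiag.image fun x : ι × ι => a x.1 - a x.2
  have hcard : (#D : ℝ) = Fintype.card ι ^ 2 - Fintype.card ι := by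
    rw [card_image_of_injOn ha, offDiag_card, card_univ, Nat.cast_sub (Nat.le_mul_self _)]
    push_cast; ring
  have hre : ‖∑ i, ψ (a i)‖ ^ 2 = Fintype.card ι + RCLike.re (∑ r ∈ D, ψ r) := by
    rw [sum_image ha, ← RCLike.natCast_re (K := K), ← map_add,
      ← norm_sq_sum_eq_card_add_sum_offDiag ψ a]
    norm_cast
  rw [hre]
  linarith [RCLike.re_le_norm (∑ r ∈ D, ψ r), norm_sum_le_card_compl hψ D]

end AddChar

theorem stmt_11_general (T : ℕ) (hT : 2 ≤ T) (Ng : ℕ) (hNg : Ng = T ^ 2 - 1)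
    (d : Fin T → ℤ)
    (hSidon : ∀ i j m n : Fin T, i ≠ j → m ≠ n → (i, j) ≠ (m, n) →
      ¬ (d i - d j ≡ d m - d n [ZMOD (Ng : ℤ)])) :
    ∀ p : ℤ, ¬ ((Ng : ℤ) ∣ p) →
      ‖(∑ t : Fin T,
          Complex.exp (2 * Real.pi * Complex.I * ((d t : ℂ) * (p : ℂ)) / (Ng : ℂ)))‖ ^ 2 ≤
        2 * (T : ℝ) - 1 := by
  intro p hp
  have hT2 : 4 ≤ T ^ 2 := by nlinarith
  have : NeZero Ng := ⟨by omega⟩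
  have hψ : (ZMod.stdAddChar (N := Ng)).mulShift p ≠ 1 :=
    ZMod.isPrimitive_stdAddChar Ng <| by rwa [Ne, ZMod.intCast_zmod_eq_zero_iff_dvd]
  have hinj : Set.InjOn (fun x : Fin T × Fin T => (d x.1 : ZMod Ng) - d x.2)
      ((univ : Finset (Fin T)).offDiag : Set (Fin T × Fin T)) := by
    rintro ⟨i, j⟩ hij ⟨m, n⟩ hmn hdiff
    by_contra hne
    simp only [coe_offDiag] at hij hmn
    refine hSidon i j m n hij.2.2 hmn.2.2 hne ?_
    rw [← ZMod.intCast_eq_intCast_iff]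
    push_cast
    exact hdiff
  have hbound := AddChar.norm_sq_sum_le_of_injOn_sub hψ (fun t => (d t : ZMod Ng)) hinj
  have hterm : ∀ t, (ZMod.stdAddChar (N := Ng)).mulShift p (d t) =
      Complex.exp (2 * Real.pi * Complex.I * ((d t : ℂ) * (p : ℂ)) / (Ng : ℂ)) := by
    intro t
    rw [AddChar.mulShift_apply, ← Int.cast_mul, ZMod.stdAddChar_coe]
    push_cast
    ring_nf
  have hNgR : (Ng : ℝ) = T ^ 2 - 1 := by rw [hNg, Nat.cast_sub (by omega)]; push_cast; ring
  simp only [hterm, ZMod.card, Fintype.card_fin, hNgR] at hbound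
  linarith

/-- For a Sidon set modulo `N_g = T² − 1` of size `T`, the exponential
sum satisfies `|Σ_t e^{2πi d_t p/N_g}|² ≤ 2T − 1` for every `p ≢ 0 (mod N_g)`. -/
theorem stmt_11 (T : ℕ) (hT : 2 ≤ T) (Ng : ℕ) (hNg : Ng = T ^ 2 - 1)
    (d : Fin T → ℤ)
    (hSidon0 : ∀ i j : Fin T, i ≠ j → ¬ ((Ng : ℤ) ∣ (d i - d j)))
    (hSidon : ∀ i j m n : Fin T, i ≠ j → m ≠ n → (i, j) ≠ (m, n) →
      ¬ (d i - d j ≡ d m - d n [ZMOD (Ng : ℤ)])) :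
    ∀ p : ℤ, ¬ ((Ng : ℤ) ∣ p) →
      ‖(∑ t : Fin T,
          Complex.exp (2 * Real.pi * Complex.I * ((d t : ℂ) * (p : ℂ)) / (Ng : ℂ)))‖ ^ 2 ≤
        2 * (T : ℝ) - 1 :=
  stmt_11_general T hT Ng hNg d hSidon
end

section
/- Let T ≥ 2, N_g = T² − 1, and consider the uniform frequency grid f_n = −1 + 2(n−1)/N_g, n = 1,…,N_g. Let Ŝ = (k_1,…,k_T) be a set of T integer shifts that is a Sidon set modulo N_g (all pairwise differences of distinct elements nonzero and pairwise distinct modulo N_g), let w ∈ ℂ^P be a filter with k_t + P ≤ N_a for all t, and suppose B(f_n;w) ≠ 0 for every grid point f_n. Then the minimum subspace distance of the convolutional beamspace subspace code {W_CB(w,Ŝ) a_U(f_n) : n = 1,…,N_g} satisfies d^(s)_min ≥ 1 − (2T−1)/T² ≥ 1 − 2/T. -/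
/-- Subspace distance between two vectors of `ℂ^M`:
`d⁽ˢ⁾(u,v) = 1 − |uᴴv|²/(‖u‖²‖v‖²)`. -/
noncomputable def subDist {M : ℕ} (u v : Fin M → ℂ) : ℝ :=
  1 - ‖∑ i, (starRingEnd ℂ) (u i) * v i‖ ^ 2 /
      ((∑ i, ‖u i‖ ^ 2) * (∑ i, ‖v i‖ ^ 2))

/-- The convolutional beamspace matrix: the `t`-th row is the conjugate of the
filter `w ∈ ℂ^P` placed in positions `k t, …, k t + P − 1` and zero elsewhere. -/
noncomputable def convBeam (Na P T : ℕ) (w : Fin P → ℂ) (k : Fin T → ℕ) :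
    Matrix (Fin T) (Fin Na) ℂ :=
  fun t m => ∑ n : Fin P, if (m : ℕ) = k t + (n : ℕ) then (starRingEnd ℂ) (w n) else 0

/-- The spatial frequency response `B(f;w) = Σ_{n} conj(w_n) e^{iπ n f}` of the filter. -/
noncomputable def freqResp (P : ℕ) (w : Fin P → ℂ) (f : ℝ) : ℂ :=
  ∑ n : Fin P, (starRingEnd ℂ) (w n) * Complex.exp (Complex.I * Real.pi * (n : ℝ) * f)

/-!
The beamspace maps the ULA steering vector `a_U(f)` to `B(f;w) · a_Ŝ(f)`, and the nonzero
scalars `B(f_l;w)`, `B(f_j;w)` cancel in the subspace distance, which becomes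
`1 − |Σ_t ψ(k_t)|² / T²` for the character `ψ(n) = e^{2πi n (j − l)/N_g}` of `ℤ/N_g`,
nontrivial because `0 < |j − l| < N_g`. Expanding, `|Σ_t ψ(k_t)|² = T + Σ_{s ≠ t} ψ(k_s − k_t)`.
The Sidon property makes the `T(T − 1)` differences distinct, so they miss exactly `T − 1`
residues; since the full character sum vanishes, the off-diagonal sum is minus a sum of
`T − 1` unimodular terms, whence `|Σ_t ψ(k_t)|² ≤ 2T − 1`.
-/
open Complex Finset Real ComplexConjugate

namespace AddChar

variable {G ι : Type*} [AddCommGroup G] [Fintype G] [Fintype ι]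

lemma ofReal_sq_norm_sum_apply (ψ : AddChar G ℂ) (k : ι → G) :
    ((‖∑ i, ψ (k i)‖ ^ 2 : ℝ) : ℂ) = ∑ p : ι × ι, ψ (k p.1 - k p.2) := by
  rw [Complex.ofReal_pow, ← Complex.mul_conj', map_sum, sum_mul_sum, ← univ_product_univ,
    sum_product]
  simp only [← map_neg_eq_conj, ← map_add_eq_mul, sub_eq_add_neg]

theorem sq_norm_sum_apply_le_of_injOn_sub {ψ : AddChar G ℂ} (hψ : ψ ≠ 1) {k : ι → G}
    (hk : Set.InjOn (fun p : ι × ι => k p.1 - k p.2) (univ.offDiag : Finset (ι × ι))) :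
    ‖∑ i, ψ (k i)‖ ^ 2 ≤
      Fintype.card ι + (Fintype.card G - Fintype.card ι * (Fintype.card ι - 1)) := by
  classical
  set n := Fintype.card ι
  set D := (univ.offDiag : Finset (ι × ι)).image (fun p => k p.1 - k p.2)
  have hD : (#D : ℝ) = n * (n - 1) := by
    rw [card_image_of_injOn hk, offDiag_card, card_univ, Nat.cast_sub (Nat.le_mul_self n)]
    push_cast
    ring
  have hDc : (#Dᶜ : ℝ) = Fintype.card G - n * (n - 1) := by
    rw [card_compl, Nat.cast_sub (card_le_univ D), hD]
  have hdiag : ∑ p ∈ univ.diag, ψ (k p.1 - k p.2) = n := by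
    rw [sum_congr rfl fun p hp => by rw [(mem_diag.mp hp).2, sub_self, map_zero_eq_one],
      sum_const, diag_card, card_univ, nsmul_one]
  have hoff : ∑ p ∈ univ.offDiag, ψ (k p.1 - k p.2) = -∑ a ∈ Dᶜ, ψ a := by
    rw [← sum_image hk, eq_neg_iff_add_eq_zero, sum_add_sum_compl, sum_eq_zero_of_ne_one hψ]
  have hS : ((‖∑ i, ψ (k i)‖ ^ 2 : ℝ) : ℂ) = n - ∑ a ∈ Dᶜ, ψ a := by
    rw [ofReal_sq_norm_sum_apply, ← univ_product_univ, ← diag_union_offDiag,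
      sum_union (disjoint_diag_offDiag _), hdiag, hoff, sub_eq_add_neg]
  calc ‖∑ i, ψ (k i)‖ ^ 2 = ‖((‖∑ i, ψ (k i)‖ ^ 2 : ℝ) : ℂ)‖ := by
        rw [Complex.norm_real, Real.norm_of_nonneg (by positivity)]
    _ ≤ ‖(n : ℂ)‖ + ∑ a ∈ Dᶜ, ‖ψ a‖ := by
        rw [hS]; exact (norm_sub_le _ _).trans (add_le_add_right (norm_sum_le _ _) _)
    _ = n + (Fintype.card G - n * (n - 1)) := by
        simp only [Complex.norm_natCast, norm_apply, sum_const, nsmul_one, hDc]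

end AddChar

/-- The steering vector `(e^{iπ x_i g})_i` of an array with sensor positions `x`; the ULA
steering vector `a_U` has `x m = m`, and `a_Ŝ` has `x = k`. -/
noncomputable def steeringVec {ι : Type*} (x : ι → ℕ) (g : ℝ) : ι → ℂ :=
  fun i => cexp (I * π * (x i : ℝ) * g)

lemma norm_steeringVec_apply {ι : Type*} (x : ι → ℕ) (g : ℝ) (i : ι) :
    ‖steeringVec x g i‖ = 1 := by
  rw [steeringVec, Complex.norm_exp]
  simp

lemma conj_steeringVec_mul_steeringVec {ι : Type*} (x : ι → ℕ) (g₁ g₂ : ℝ) (i : ι) :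
    conj (steeringVec x g₁ i) * steeringVec x g₂ i = steeringVec x (g₂ - g₁) i := by
  simp only [steeringVec, ← Complex.exp_conj, map_mul, Complex.conj_I, Complex.conj_ofReal,
    ← Complex.exp_add]
  push_cast
  ring_nf

theorem convBeam_mulVec_steeringVec {Na P T : ℕ} (w : Fin P → ℂ) {k : Fin T → ℕ}
    (hk : ∀ t, k t + P ≤ Na) (g : ℝ) :
    (convBeam Na P T w k).mulVec (steeringVec (fun m : Fin Na => (m : ℕ)) g) =
      freqResp P w g • steeringVec k g := by
  ext t
  simp only [convBeam, Matrix.mulVec, dotProduct, freqResp, Pi.smul_apply, smul_eq_mul,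
    sum_mul, ite_mul, zero_mul]
  rw [sum_comm]
  refine sum_congr rfl fun n _ => ?_
  have hn : k t + n < Na := by have := hk t; omega
  rw [sum_eq_single_of_mem ⟨k t + n, hn⟩ (mem_univ _)
    fun m _ hm => if_neg fun h => hm (Fin.ext h), if_pos rfl]
  simp only [steeringVec]
  rw [mul_assoc (conj (w n)), ← Complex.exp_add]
  push_cast
  ring_nf

lemma subDist_smul_smul {M : ℕ} {a b : ℂ} (ha : a ≠ 0) (hb : b ≠ 0) (u v : Fin M → ℂ) :
    subDist (a • u) (b • v) = subDist u v := by
  have hsum : ∑ i, conj (a * u i) * (b * v i) = conj a * b * ∑ i, conj (u i) * v i := by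
    rw [mul_sum]
    refine sum_congr rfl fun i _ => ?_
    rw [map_mul]
    ring
  have hab : ‖a‖ ^ 2 * ‖b‖ ^ 2 ≠ 0 := by positivity
  simp only [subDist, Pi.smul_apply, smul_eq_mul, norm_mul, mul_pow, ← mul_sum, hsum,
    Complex.norm_conj]
  rw [mul_mul_mul_comm, mul_div_mul_left _ _ hab]

lemma subDist_steeringVec {M : ℕ} (x : Fin M → ℕ) (g₁ g₂ : ℝ) :
    subDist (steeringVec x g₁) (steeringVec x g₂) =
      1 - ‖∑ i, steeringVec x (g₂ - g₁) i‖ ^ 2 / (M : ℝ) ^ 2 := by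
  simp only [subDist, conj_steeringVec_mul_steeringVec, norm_steeringVec_apply, one_pow,
    sum_const, card_univ, Fintype.card_fin, nsmul_one, ← sq]

lemma injOn_offDiag_natCast_sub_of_modEq {ι : Type*} [Fintype ι] {N : ℕ} {k : ι → ℕ}
    (hk : ∀ i j m n : ι, i ≠ j → m ≠ n → (i, j) ≠ (m, n) →
      ¬ ((k i : ℤ) - (k j : ℤ) ≡ (k m : ℤ) - (k n : ℤ) [ZMOD (N : ℤ)])) :
    Set.InjOn (fun p : ι × ι => (k p.1 : ZMod N) - k p.2) (univ.offDiag : Finset (ι × ι)) := by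
  intro p hp q hq hpq
  by_contra hne
  refine hk p.1 p.2 q.1 q.2 (mem_offDiag.mp hp).2.2 (mem_offDiag.mp hq).2.2 hne ?_
  rw [← ZMod.intCast_eq_intCast_iff]
  push_cast
  exact hpq

lemma steeringVec_grid_sub {N : ℕ} [NeZero N] {f : Fin N → ℝ}
    (hf : ∀ n, f n = -1 + 2 * (n : ℝ) / N) (l j : Fin N) {ι : Type*} (x : ι → ℕ) (i : ι) :
    steeringVec x (f j - f l) i =
      (ZMod.stdAddChar.mulShift (((j : ℕ) : ZMod N) - ((l : ℕ) : ZMod N))) (x i) := by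
  have hcast : (((j : ℕ) : ZMod N) - ((l : ℕ) : ZMod N)) * (x i : ℕ) =
      (((((j : ℕ) : ℤ) - (l : ℕ)) * (x i : ℕ) : ℤ) : ZMod N) := by
    push_cast; rfl
  rw [AddChar.mulShift_apply, hcast, ZMod.stdAddChar_coe, steeringVec, hf, hf]
  have hN : (N : ℂ) ≠ 0 := NeZero.ne _
  congr 1
  push_cast
  field_simp
  ring

lemma natCast_val_sub_natCast_val_ne_zero {N : ℕ} {l j : Fin N} (h : l ≠ j) :
    ((j : ℕ) : ZMod N) - ((l : ℕ) : ZMod N) ≠ 0 := by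
  rw [sub_ne_zero, Ne, ZMod.natCast_eq_natCast_iff', Nat.mod_eq_of_lt j.isLt,
    Nat.mod_eq_of_lt l.isLt]
  exact fun hjl => h (Fin.ext hjl).symm

theorem stmt_16_general (T : ℕ) (Ng : ℕ) (hNg : Ng = T ^ 2 - 1)
    (Na P : ℕ) (w : Fin P → ℂ) (k : Fin T → ℕ) (hk : ∀ t, k t + P ≤ Na)
    (hSidon : ∀ i j m n : Fin T, i ≠ j → m ≠ n → (i, j) ≠ (m, n) →
      ¬ ((k i : ℤ) - (k j : ℤ) ≡ (k m : ℤ) - (k n : ℤ) [ZMOD (Ng : ℤ)]))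
    (f : Fin Ng → ℝ) (hf : ∀ n, f n = -1 + 2 * (n : ℝ) / Ng)
    (aU : ℝ → Fin Na → ℂ)
    (haU : ∀ g (m : Fin Na), aU g m = Complex.exp (Complex.I * Real.pi * (m : ℝ) * g))
    (hB : ∀ n : Fin Ng, freqResp P w (f n) ≠ 0) :
    (∀ l j : Fin Ng, l ≠ j →
      subDist ((convBeam Na P T w k).mulVec (aU (f l)))
          ((convBeam Na P T w k).mulVec (aU (f j))) ≥
        1 - (2 * (T : ℝ) - 1) / (T : ℝ) ^ 2) ∧
    1 - (2 * (T : ℝ) - 1) / (T : ℝ) ^ 2 ≥ 1 - 2 / (T : ℝ) := by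
  refine ⟨fun l j hlj => ?_, ?_⟩
  · have hNg0 : 0 < Ng := l.pos
    have : NeZero Ng := ⟨hNg0.ne'⟩
    obtain rfl : aU = steeringVec (fun m : Fin Na => (m : ℕ)) := funext fun g => funext (haU g)
    set ψ := ZMod.stdAddChar.mulShift (((j : ℕ) : ZMod Ng) - ((l : ℕ) : ZMod Ng))
    have hψ : ψ ≠ 1 := ZMod.isPrimitive_stdAddChar Ng (natCast_val_sub_natCast_val_ne_zero hlj)
    have hsum := AddChar.sq_norm_sum_apply_le_of_injOn_sub hψ (k := fun t => (k t : ZMod Ng))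
      (injOn_offDiag_natCast_sub_of_modEq hSidon)
    have hNgR : (Ng : ℝ) = (T : ℝ) ^ 2 - 1 := by
      rw [hNg, Nat.cast_sub (by omega), Nat.cast_pow, Nat.cast_one]
    rw [ZMod.card, Fintype.card_fin, hNgR] at hsum
    rw [convBeam_mulVec_steeringVec w hk, convBeam_mulVec_steeringVec w hk,
      subDist_smul_smul (hB l) (hB j), subDist_steeringVec]
    simp only [steeringVec_grid_sub hf]
    gcongr
    linarith
  · rw [ge_iff_le, sub_le_sub_iff_left]
    rcases Nat.eq_zero_or_pos T with rfl | hT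
    · simp
    · rw [div_le_div_iff₀ (by positivity) (by positivity)]
      nlinarith

/-- For Sidon (Golomb) shifts modulo `N_g = T² − 1` and a filter whose
response does not vanish on the uniform grid, the convolutional beamspace subspace
code has minimum subspace distance at least `1 − (2T−1)/T² ≥ 1 − 2/T`. -/
theorem stmt_16 (T : ℕ) (hT : 2 ≤ T) (Ng : ℕ) (hNg : Ng = T ^ 2 - 1)
    (Na P : ℕ) (w : Fin P → ℂ) (k : Fin T → ℕ) (hk : ∀ t, k t + P ≤ Na)
    (hSidon0 : ∀ i j : Fin T, i ≠ j → ¬ ((Ng : ℤ) ∣ ((k i : ℤ) - (k j : ℤ))))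
    (hSidon : ∀ i j m n : Fin T, i ≠ j → m ≠ n → (i, j) ≠ (m, n) →
      ¬ ((k i : ℤ) - (k j : ℤ) ≡ (k m : ℤ) - (k n : ℤ) [ZMOD (Ng : ℤ)]))
    (f : Fin Ng → ℝ) (hf : ∀ n, f n = -1 + 2 * (n : ℝ) / Ng)
    (aU : ℝ → Fin Na → ℂ)
    (haU : ∀ g (m : Fin Na), aU g m = Complex.exp (Complex.I * Real.pi * (m : ℝ) * g))
    (hB : ∀ n : Fin Ng, freqResp P w (f n) ≠ 0) :
    (∀ l j : Fin Ng, l ≠ j →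
      subDist ((convBeam Na P T w k).mulVec (aU (f l)))
          ((convBeam Na P T w k).mulVec (aU (f j))) ≥
        1 - (2 * (T : ℝ) - 1) / (T : ℝ) ^ 2) ∧
    1 - (2 * (T : ℝ) - 1) / (T : ℝ) ^ 2 ≥ 1 - 2 / (T : ℝ) :=
  stmt_16_general T Ng hNg Na P w k hk hSidon f hf aU haU hB
end

section
/- Let T ≥ 3 and N_g = T² − 1, with the uniform frequency grid f_n = −1 + 2(n−1)/N_g, n = 1,…,N_g. Let Ŝ_ULA = {0,1,…,T−1} and a_{Ŝ_ULA}(f) = (e^{iπ t f})_{t=0}^{T−1} ∈ ℂ^T. Then the minimum subspace distance of the code {a_{Ŝ_ULA}(f_n) : n = 1,…,N_g} satisfies 1 − max_{l≠k} |a_{Ŝ_ULA}(f_l)^H a_{Ŝ_ULA}(f_k)|²/T² ≤ 1 − 4/π². Consequently, for any filter w with B(f_n;w) ≠ 0 on the grid, the convolutional beamspace subspace code with uniform (ULA) shifts also has minimum subspace distance at most 1 − 4/π². -/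
/-!
Adjacent grid points differ by `δ = 2/(T² − 1)`, so the Gram entry of their steering vectors is
`∑_{t<T} e^{iπtδ}`. After rotating by `e^{-iπδ(T−1)/2}` all phases lie in `[−π/(T+1), π/(T+1)]`,
inside `[−π/4, π/4]` for `T ≥ 3`, so the real part of the sum is at least
`T cos(π/4) ≥ 2T/π`. For the beamspace code, `W_CB a_U(f) = B(f;w) a_ULA(f)`, and the subspace
distance does not see nonzero scalar factors.
-/

open Finset Complex Real ComplexConjugate

theorem card_mul_cos_le_norm_sum_exp {ι : Type*} (s : Finset ι) (φ : ι → ℝ) {α : ℝ}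
    (hα : α ≤ π) (hφ : ∀ i ∈ s, |φ i| ≤ α) :
    #s * Real.cos α ≤ ‖∑ i ∈ s, cexp (φ i * I)‖ :=
  calc #s * Real.cos α = ∑ i ∈ s, Real.cos α := by simp
    _ ≤ ∑ i ∈ s, Real.cos (φ i) := sum_le_sum fun i hi => by
        rw [← Real.cos_abs (φ i)]
        exact Real.cos_le_cos_of_nonneg_of_le_pi (abs_nonneg _) hα (hφ i hi)
    _ = (∑ i ∈ s, cexp (φ i * I)).re := by simp only [re_sum, exp_ofReal_mul_I_re]
    _ ≤ _ := re_le_norm _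

theorem card_mul_cos_le_norm_sum_exp_arith (T : ℕ) {δ : ℝ} (hδ : 0 ≤ δ)
    (hδT : δ * (T - 1) ≤ 2) :
    T * Real.cos (π * δ * (T - 1) / 2) ≤ ‖∑ t : Fin T, cexp (I * π * (t : ℝ) * δ)‖ := by
  set α := π * δ * (T - 1) / 2
  have hrot : ∑ t : Fin T, cexp (I * π * (t : ℝ) * δ) =
      cexp (α * I) * ∑ t : Fin T, cexp ((π * δ * t - α : ℝ) * I) := by
    rw [mul_sum]
    refine sum_congr rfl fun t _ => ?_
    rw [← Complex.exp_add]
    push_cast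
    ring_nf
  have hspread : ∀ t ∈ (univ : Finset (Fin T)), |π * δ * t - α| ≤ α := by
    intro t _
    have ht : (t : ℝ) ≤ T - 1 := by
      have : (t : ℝ) + 1 ≤ T := by exact_mod_cast t.isLt
      linarith
    have h0 : 0 ≤ π * δ * t := by positivity
    have h1 : π * δ * t ≤ 2 * α := by
      have := mul_le_mul_of_nonneg_left ht (mul_nonneg pi_pos.le hδ)
      simp only [α]
      linarith
    rw [abs_le]
    constructor <;> linarith
  have hαπ : α ≤ π := by
    have := mul_le_mul_of_nonneg_left hδT pi_pos.le
    simp only [α]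
    linarith
  rw [hrot, norm_mul, norm_exp_ofReal_mul_I, one_mul]
  simpa using card_mul_cos_le_norm_sum_exp univ (fun t : Fin T => π * δ * t - α) hαπ hspread

theorem two_div_pi_le_cos {x : ℝ} (hx : |x| ≤ π / 4) : 2 / π ≤ Real.cos x := by
  have hcos : Real.cos (π / 4) ≤ Real.cos x := by
    rw [← Real.cos_abs x]
    exact Real.cos_le_cos_of_nonneg_of_le_pi (abs_nonneg x) (by linarith [pi_pos]) hx
  have hsqrt : (1.4 : ℝ) ≤ √2 := by
    rw [Real.le_sqrt (by norm_num) (by norm_num)]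
    norm_num
  have hpi : 2 / π ≤ √2 / 2 := by
    rw [div_le_div_iff₀ pi_pos (by norm_num)]
    nlinarith [pi_gt_d2]
  rw [cos_pi_div_four] at hcos
  linarith

noncomputable def ula (T : ℕ) (g : ℝ) : Fin T → ℂ := fun t => cexp (I * π * (t : ℝ) * g)

theorem norm_ula (T : ℕ) (g : ℝ) (t : Fin T) : ‖ula T g t‖ = 1 := by
  rw [ula, show I * π * (t : ℝ) * g = ((π * t * g : ℝ) : ℂ) * I by push_cast; ring]
  exact norm_exp_ofReal_mul_I _

theorem sum_conj_ula_mul_ula (T : ℕ) (g g' : ℝ) :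
    ∑ t, conj (ula T g t) * ula T g' t = ∑ t : Fin T, cexp (I * π * (t : ℝ) * (g' - g)) := by
  refine sum_congr rfl fun t _ => ?_
  rw [ula, ula, ← Complex.exp_conj, ← Complex.exp_add]
  simp only [map_mul, conj_I, conj_ofReal]
  ring_nf

theorem subDist_ula (T : ℕ) (g g' : ℝ) :
    subDist (ula T g) (ula T g') =
      1 - ‖∑ t, conj (ula T g t) * ula T g' t‖ ^ 2 / (T : ℝ) ^ 2 := by
  simp [subDist, norm_ula, sq]

theorem subDist_ula_le_of_sub_eq (T : ℕ) (hT : 3 ≤ T) {g g' : ℝ}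
    (h : g' - g = 2 / ((T : ℝ) ^ 2 - 1)) :
    subDist (ula T g) (ula T g') ≤ 1 - 4 / π ^ 2 := by
  have hT' : (3 : ℝ) ≤ T := by exact_mod_cast hT
  have hδ : 2 / ((T : ℝ) ^ 2 - 1) * (T - 1) = 2 / (T + 1) := by
    have : (T : ℝ) ^ 2 - 1 = (T + 1) * (T - 1) := by ring
    rw [this, div_mul_eq_mul_div, mul_div_mul_right _ _ (by linarith)]
  have hα : π * (2 / ((T : ℝ) ^ 2 - 1)) * (T - 1) / 2 = π / (T + 1) := by
    rw [mul_assoc, hδ]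
    ring
  have hαle : |π / (T + 1)| ≤ π / 4 := by
    rw [abs_of_nonneg (by positivity)]
    exact div_le_div_of_nonneg_left pi_pos.le (by norm_num) (by linarith)
  have hnorm : 2 * T / π ≤ ‖∑ t, conj (ula T g t) * ula T g' t‖ := by
    rw [sum_conj_ula_mul_ula, ← Complex.ofReal_sub, h]
    calc 2 * T / π = T * (2 / π) := by ring
      _ ≤ T * Real.cos (π / (T + 1)) := by gcongr; exact two_div_pi_le_cos hαle
      _ ≤ _ := by
        rw [← hα]
        refine card_mul_cos_le_norm_sum_exp_arith T (div_nonneg zero_le_two (by nlinarith)) ?_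
        rw [hδ, div_le_iff₀ (by positivity)]
        linarith
  have hsq : 4 / π ^ 2 ≤ ‖∑ t, conj (ula T g t) * ula T g' t‖ ^ 2 / (T : ℝ) ^ 2 := by
    rw [le_div_iff₀ (by positivity)]
    calc 4 / π ^ 2 * T ^ 2 = (2 * T / π) ^ 2 := by ring
      _ ≤ _ := pow_le_pow_left₀ (by positivity) hnorm 2
  rw [subDist_ula]
  linarith

theorem subDist_smul {M : ℕ} {c d : ℂ} (hc : c ≠ 0) (hd : d ≠ 0) (u v : Fin M → ℂ) :
    subDist (c • u) (d • v) = subDist u v := by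
  have hinner : ∑ i, conj ((c • u) i) * (d • v) i = conj c * d * ∑ i, conj (u i) * v i := by
    rw [mul_sum]
    exact sum_congr rfl fun i _ => by simp only [Pi.smul_apply, smul_eq_mul, map_mul]; ring
  have hnorm (a : ℂ) (x : Fin M → ℂ) : ∑ i, ‖(a • x) i‖ ^ 2 = ‖a‖ ^ 2 * ∑ i, ‖x i‖ ^ 2 := by
    rw [mul_sum]
    exact sum_congr rfl fun i _ => by rw [Pi.smul_apply, smul_eq_mul, norm_mul, mul_pow]
  have hcd : ‖c‖ ^ 2 * ‖d‖ ^ 2 ≠ 0 := by simp [hc, hd]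
  rw [subDist, subDist, hinner, hnorm, hnorm, norm_mul, norm_mul, norm_conj, mul_pow, mul_pow,
    mul_mul_mul_comm, mul_div_mul_left _ _ hcd]

theorem convBeam_mulVec_ula {Na P T : ℕ} (w : Fin P → ℂ) (hNa : T - 1 + P ≤ Na) (g : ℝ) :
    (convBeam Na P T w (fun t => t)).mulVec (ula Na g) = freqResp P w g • ula T g := by
  ext t
  have hlt (n : Fin P) : (t : ℕ) + n < Na := by omega
  have hentry (n : Fin P) :
      ∑ m : Fin Na, (if (m : ℕ) = t + n then conj (w n) else 0) * ula Na g m =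
        conj (w n) * ula Na g ⟨t + n, hlt n⟩ := by
    refine (sum_eq_single ⟨t + n, hlt n⟩ (fun m _ hm => ?_) (by simp)).trans (by rw [if_pos rfl])
    rw [if_neg (fun h => hm (Fin.ext h)), zero_mul]
  simp only [Matrix.mulVec, dotProduct, convBeam, sum_mul]
  rw [sum_comm, sum_congr rfl fun n _ => hentry n, Pi.smul_apply, smul_eq_mul, freqResp, sum_mul]
  refine sum_congr rfl fun n _ => ?_
  simp only [ula]
  rw [mul_assoc (conj (w n)), ← Complex.exp_add]
  push_cast
  ring_nf

/-- With uniform (ULA) shifts `{0,…,T−1}` on the uniform grid with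
`N_g = T² − 1`, the minimum subspace distance is at most `1 − 4/π²`; consequently
the convolutional beamspace code with ULA shifts (and a filter response that does
not vanish on the grid) also has minimum subspace distance at most `1 − 4/π²`. -/
theorem stmt_17 (T : ℕ) (hT : 3 ≤ T) (Ng : ℕ) (hNg : Ng = T ^ 2 - 1)
    (f : Fin Ng → ℝ) (hf : ∀ n, f n = -1 + 2 * (n : ℝ) / Ng)
    (aULA : ℝ → Fin T → ℂ)
    (haULA : ∀ g (t : Fin T), aULA g t = Complex.exp (Complex.I * Real.pi * (t : ℝ) * g)) :
    (∃ l j : Fin Ng, l ≠ j ∧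
      1 - ‖∑ t, (starRingEnd ℂ) (aULA (f l) t) * aULA (f j) t‖ ^ 2 / (T : ℝ) ^ 2 ≤
        1 - 4 / Real.pi ^ 2) ∧
    (∀ (Na P : ℕ) (w : Fin P → ℂ), (T - 1) + P ≤ Na →
      (∀ n : Fin Ng, freqResp P w (f n) ≠ 0) →
      ∀ (aU : ℝ → Fin Na → ℂ),
        (∀ g (m : Fin Na), aU g m = Complex.exp (Complex.I * Real.pi * (m : ℝ) * g)) →
        ∃ l j : Fin Ng, l ≠ j ∧
          subDist ((convBeam Na P T w (fun t => (t : ℕ))).mulVec (aU (f l)))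
              ((convBeam Na P T w (fun t => (t : ℕ))).mulVec (aU (f j))) ≤
            1 - 4 / Real.pi ^ 2) := by
  have hT2 : 9 ≤ T ^ 2 := by nlinarith
  have hNgR : (Ng : ℝ) = (T : ℝ) ^ 2 - 1 := by
    rw [hNg, Nat.cast_sub (by omega), Nat.cast_pow, Nat.cast_one]
  let l : Fin Ng := ⟨0, by omega⟩
  let j : Fin Ng := ⟨1, by omega⟩
  have hlj : l ≠ j := by simp [l, j, Fin.ext_iff]
  have hstep : f j - f l = 2 / ((T : ℝ) ^ 2 - 1) := by
    rw [hf, hf, ← hNgR]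
    simp [l, j]
  obtain rfl : aULA = ula T := funext₂ haULA
  refine ⟨⟨l, j, hlj, ?_⟩, fun Na P w hNa hB aU haU => ⟨l, j, hlj, ?_⟩⟩
  · rw [← subDist_ula]
    exact subDist_ula_le_of_sub_eq T hT hstep
  · obtain rfl : aU = ula Na := funext₂ haU
    rw [convBeam_mulVec_ula w hNa, convBeam_mulVec_ula w hNa, subDist_smul (hB l) (hB j)]
    exact subDist_ula_le_of_sub_eq T hT hstep
end
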